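/- Let V = (Fin K → ℂ) × (Fin K → ℂ) with the symplectic form ω((x,ξ),(x',ξ')) = Σᵢ ξ'ᵢxᵢ − Σᵢ ξᵢx'ᵢ and entrywise conjugation; let N ≥ 1 and let Ṽ = Fin N → V carry the symplectic form ω̃(u,v) = Σᵢ ω(uᵢ, vᵢ) and entrywise conjugation. Let W ⊆ Ṽ be a coisotropic subspace invariant under conjugation. Let L ⊆ V be a Lagrangian subspace with Im ω(X̄, X) > 0 for all nonzero X ∈ L, and set L̃ = {v : Fin N → V : vᵢ ∈ L for all i}. Then L̃ is a Lagrangian subspace of Ṽ, L̃ ∩ W° = {0}, and for every x ∈ (L̃ ∩ W) + W° with x ∉ W° one has Im ω̃(x̄, x) > 0. (This is the statement that the renormalization maps g(L) = t_W(L̃) of the paper, and more generally the class of rational maps of Section 6, have no indeterminacy points on the Siegel domain S₊ and map S₊ into S₊.) -/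
import Mathlib


open Matrix

noncomputable section

/-- `V = ℂ^K × (ℂ^K)^*`. -/
abbrev VK (K : ℕ) : Type := (Fin K → ℂ) × (Fin K → ℂ)

/-- The canonical symplectic form `ω((x,ξ),(x',ξ')) = Σᵢ ξ'ᵢ xᵢ − Σᵢ ξᵢ x'ᵢ`. -/
def omegaV {K : ℕ} : VK K →ₗ[ℂ] VK K →ₗ[ℂ] ℂ :=
  LinearMap.mk₂ ℂ (fun v w => ∑ i, w.2 i * v.1 i - ∑ i, v.2 i * w.1 i)
    (by
      intro m₁ m₂ n
      simp only [Prod.fst_add, Prod.snd_add, Pi.add_apply, mul_add, add_mul,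
        Finset.sum_add_distrib]
      ring)
    (by
      intro c m n
      simp only [Prod.smul_fst, Prod.smul_snd, Pi.smul_apply, smul_eq_mul, mul_sub,
        Finset.mul_sum, mul_comm, mul_left_comm, mul_assoc])
    (by
      intro m n₁ n₂
      simp only [Prod.fst_add, Prod.snd_add, Pi.add_apply, mul_add, add_mul,
        Finset.sum_add_distrib]
      ring)
    (by
      intro m c n
      simp only [Prod.smul_fst, Prod.smul_snd, Pi.smul_apply, smul_eq_mul, mul_sub,
        Finset.mul_sum, mul_comm, mul_left_comm, mul_assoc])

/-- Entrywise complex conjugation on `V`. -/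
def conjV {K : ℕ} (v : VK K) : VK K :=
  (fun i => starRingEnd ℂ (v.1 i), fun i => starRingEnd ℂ (v.2 i))

/-- The `ω`-orthogonal of a subspace `U`. -/
def sympOrth {V : Type*} [AddCommGroup V] [Module ℂ V]
    (ω : V →ₗ[ℂ] V →ₗ[ℂ] ℂ) (U : Submodule ℂ V) : Submodule ℂ V where
  carrier := {v | ∀ u ∈ U, ω v u = 0}
  add_mem' := by
    intro a b ha hb u hu
    simp [map_add, LinearMap.add_apply, ha u hu, hb u hu]
  zero_mem' := by
    intro u hu
    simp
  smul_mem' := by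
    intro c a ha u hu
    simp [_root_.map_smul, LinearMap.smul_apply, ha u hu]

/-- `Ṽ = Fin N → V`, the direct sum of `N` copies of `V`. -/
abbrev VN (N K : ℕ) : Type := Fin N → VK K

/-- The symplectic form `ω̃(u,v) = Σᵢ ω(uᵢ, vᵢ)` on `Ṽ`. -/
def omegaTilde {N K : ℕ} : VN N K →ₗ[ℂ] VN N K →ₗ[ℂ] ℂ :=
  LinearMap.mk₂ ℂ (fun u v => ∑ i, omegaV (u i) (v i))
    (by
      intro m₁ m₂ n
      simp [Pi.add_apply, map_add, LinearMap.add_apply, Finset.sum_add_distrib])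
    (by
      intro c m n
      simp [Pi.smul_apply, _root_.map_smul, LinearMap.smul_apply, smul_eq_mul,
        Finset.mul_sum])
    (by
      intro m n₁ n₂
      simp [Pi.add_apply, map_add, LinearMap.add_apply, Finset.sum_add_distrib])
    (by
      intro m c n
      simp [Pi.smul_apply, _root_.map_smul, LinearMap.smul_apply, smul_eq_mul,
        Finset.mul_sum])

/-- Entrywise conjugation on `Ṽ`. -/
def conjN {N K : ℕ} (v : VN N K) : VN N K := fun i => conjV (v i)

lemma mem_sympOrth {V : Type*} [AddCommGroup V] [Module ℂ V]
    (ω : V →ₗ[ℂ] V →ₗ[ℂ] ℂ) (U : Submodule ℂ V) (v : V) :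
    v ∈ sympOrth ω U ↔ ∀ u ∈ U, ω v u = 0 := Iff.rfl

lemma omegaV_apply {K : ℕ} (v w : VK K) :
    omegaV v w = ∑ i, w.2 i * v.1 i - ∑ i, v.2 i * w.1 i := rfl

lemma omegaTilde_apply {N K : ℕ} (u v : VN N K) :
    omegaTilde u v = ∑ i, omegaV (u i) (v i) := rfl

lemma omegaV_skew {K : ℕ} (v w : VK K) : omegaV v w = - omegaV w v := by
  simp only [omegaV_apply]; ring

lemma omegaTilde_skew {N K : ℕ} (v w : VN N K) : omegaTilde v w = - omegaTilde w v := by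
  simp only [omegaTilde_apply, ← Finset.sum_neg_distrib]
  exact Finset.sum_congr rfl fun i _ => omegaV_skew _ _

lemma omegaV_conj {K : ℕ} (v w : VK K) :
    omegaV (conjV v) (conjV w) = starRingEnd ℂ (omegaV v w) := by
  simp [omegaV_apply, conjV, map_sub, map_sum, _root_.map_mul]

lemma conjV_conjV {K : ℕ} (v : VK K) : conjV (conjV v) = v := by
  simp [conjV]

lemma conjN_conjN {N K : ℕ} (v : VN N K) : conjN (conjN v) = v := by
  funext i; exact conjV_conjV _

lemma omegaTilde_conj {N K : ℕ} (v w : VN N K) :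
    omegaTilde (conjN v) (conjN w) = starRingEnd ℂ (omegaTilde v w) := by
  simp only [omegaTilde_apply, conjN, map_sum]
  exact Finset.sum_congr rfl fun i _ => omegaV_conj _ _

section helpers

variable {N K : ℕ} (L : Submodule ℂ (VK K))
  (hSiegel : ∀ X ∈ L, X ≠ 0 → 0 < (omegaV (conjV X) X).im)

include hSiegel in
lemma imV_nonneg {X : VK K} (hX : X ∈ L) : 0 ≤ (omegaV (conjV X) X).im := by
  rcases eq_or_ne X 0 with rfl | h
  · simp
  · exact le_of_lt (hSiegel X hX h)

include hSiegel in
lemma imTilde_pos {v : VN N K} (hv : ∀ i, v i ∈ L) (hne : v ≠ 0) :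
    0 < (omegaTilde (conjN v) v).im := by
  obtain ⟨i, hi⟩ : ∃ i, v i ≠ 0 := by
    by_contra h
    push_neg at h
    exact hne (funext h)
  rw [omegaTilde_apply, Complex.im_sum]
  exact Finset.sum_pos' (fun j _ => imV_nonneg L hSiegel (hv j))
    ⟨i, Finset.mem_univ i, hSiegel (v i) (hv i) hi⟩

include hSiegel in
lemma eq_zero_of_im_eq_zero {v : VN N K} (hv : ∀ i, v i ∈ L)
    (h : (omegaTilde (conjN v) v).im = 0) : v = 0 := by
  by_contra hne
  exact absurd h (ne_of_gt (imTilde_pos L hSiegel hv hne))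

end helpers

/-- If `W ⊆ Ṽ` is a conjugation-invariant coisotropic subspace and `L` a Lagrangian subspace
of `V` lying in the Siegel domain, then `L̃ = {v : ∀ i, vᵢ ∈ L}` is Lagrangian in `Ṽ`,
`L̃ ∩ W° = 0`, and every `x ∈ (L̃ ∩ W) + W°` with `x ∉ W°` has `Im ω̃(x̄,x) > 0`: the
renormalization map `g(L) = t_W(L̃)` has no indeterminacy points on the Siegel domain and maps
it into the Siegel domain. -/
theorem statement_13 {N K : ℕ} (hN : 1 ≤ N)
    (W : Submodule ℂ (VN N K))
    (hWco : sympOrth omegaTilde W ≤ W)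
    (hWconj : ∀ x ∈ W, conjN x ∈ W)
    (L : Submodule ℂ (VK K))
    (hLlag : sympOrth omegaV L = L)
    (hSiegel : ∀ X ∈ L, X ≠ 0 → 0 < (omegaV (conjV X) X).im) :
    sympOrth omegaTilde (Submodule.pi Set.univ fun _ : Fin N => L)
        = Submodule.pi Set.univ (fun _ : Fin N => L) ∧
      (Submodule.pi Set.univ fun _ : Fin N => L) ⊓ sympOrth omegaTilde W = ⊥ ∧
      ∀ x ∈ ((Submodule.pi Set.univ fun _ : Fin N => L) ⊓ W) ⊔ sympOrth omegaTilde W,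
        x ∉ sympOrth omegaTilde W → 0 < (omegaTilde (conjN x) x).im := by
  -- notation
  set Lt : Submodule ℂ (VN N K) := Submodule.pi Set.univ fun _ : Fin N => L with hLt
  have memLt : ∀ v : VN N K, v ∈ Lt ↔ ∀ i, v i ∈ L := by
    intro v
    simp [hLt, Submodule.mem_pi]
  -- W° is conjugation invariant
  have hWoconj : ∀ b ∈ sympOrth omegaTilde W, conjN b ∈ sympOrth omegaTilde W := by
    intro b hb u hu
    have h1 : omegaTilde (conjN b) (conjN (conjN u)) = starRingEnd ℂ (omegaTilde b (conjN u)) :=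
      omegaTilde_conj _ _
    rw [conjN_conjN] at h1
    rw [h1, hb (conjN u) (hWconj u hu), map_zero]
  -- L̃ is Lagrangian
  have hlag : sympOrth omegaTilde Lt = Lt := by
    apply le_antisymm
    · intro v hv
      rw [memLt]
      intro i
      rw [← hLlag, mem_sympOrth]
      intro X hX
      set u : VN N K := fun j => if j = i then X else 0 with hu
      have huLt : u ∈ Lt := by
        rw [memLt]
        intro j
        by_cases h : j = i <;> simp [hu, h, hX, L.zero_mem]
      have := hv u huLt
      rw [omegaTilde_apply] at this
      rw [Finset.sum_eq_single i (fun j _ hj => by simp [hu, hj]) (by simp)] at this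
      simpa [hu] using this
    · intro v hv
      rw [memLt] at hv
      rw [mem_sympOrth]
      intro u hu
      rw [memLt] at hu
      rw [omegaTilde_apply]
      apply Finset.sum_eq_zero
      intro i _
      have : v i ∈ sympOrth omegaV L := by rw [hLlag]; exact hv i
      exact this (u i) (hu i)
  refine ⟨hlag, ?_, ?_⟩
  · -- L̃ ⊓ W° = ⊥
    rw [Submodule.eq_bot_iff]
    rintro x ⟨hxL, hxWo⟩
    have hxW : x ∈ W := hWco hxWo
    have h0 : omegaTilde x (conjN x) = 0 := hxWo (conjN x) (hWconj x hxW)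
    have h0' : omegaTilde (conjN x) x = 0 := by
      rw [omegaTilde_skew, h0, neg_zero]
    exact eq_zero_of_im_eq_zero L hSiegel ((memLt x).1 hxL) (by rw [h0']; rfl)
  · -- positivity on the reduced space
    intro x hx hxWo
    rw [Submodule.mem_sup] at hx
    obtain ⟨a, ha, b, hb, rfl⟩ := hx
    obtain ⟨haL, haW⟩ := ha
    have hbW : b ∈ W := hWco hb
    have hcbWo : conjN b ∈ sympOrth omegaTilde W := hWoconj b hb
    have haL' := (memLt a).1 haL
    have hane : a ≠ 0 := by
      rintro rfl
      rw [zero_add] at hxWo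
      exact hxWo hb
    have hconj1 : omegaTilde (conjN a) b = 0 := by
      rw [omegaTilde_skew, hb (conjN a) (hWconj a haW), neg_zero]
    have hconj2 : omegaTilde (conjN b) a = 0 := hcbWo a haW
    have hconj3 : omegaTilde (conjN b) b = 0 := hcbWo b hbW
    have hexp : omegaTilde (conjN (a + b)) (a + b) = omegaTilde (conjN a) a := by
      have : conjN (a + b) = conjN a + conjN b := by
        funext i
        simp only [conjN, conjV, Pi.add_apply, Prod.fst_add, Prod.snd_add, map_add,
          Prod.mk_add_mk, Prod.ext_iff]
        exact ⟨rfl, rfl⟩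
      rw [this]
      simp only [map_add, LinearMap.add_apply, hconj1, hconj2, hconj3, add_zero, zero_add]
    rw [hexp]
    exact imTilde_pos L hSiegel haL' hane
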